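/- arXiv:2009.11620 — 4 statements merged into one kernel-verified Lean document; each statement's English description precedes it below -/
import Mathlib

section
/- Let A and B be small categories, i : A → B a fully faithful functor, C a category with all small colimits, and F : B → C a functor. Then the left Kan extension Lan_{y_B}(F) : P(B) → C of F along the Yoneda embedding y_B factors through i^* : P(B) → P(A) up to natural isomorphism (i.e. there exists a functor G : P(A) → C and a natural isomorphism Lan_{y_B}(F) ≅ G ∘ i^*) if and only if the canonical natural transformation Lan_i(F ∘ i) → F, induced by the universal property of the left Kan extension of F ∘ i along i from the identity natural transformation of F ∘ i, is a natural isomorphism. -/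
/-!
Write `Φ = Lan_{y_B} F` and let `ε` be the counit of `i_! ⊣ i^*`. As `i` is fully faithful,
the unit of this adjunction is invertible, so `Φ` factors through `i^*` iff
`Φ ε : Φ i_! i^* ⟶ Φ` is invertible (take `G = Φ i_!`). Since `Φ` is a left Kan extension
along `y_B`, `Φ ε` is invertible iff its restriction along `y_B` is: a section is built from
the universal property, and any section of `Φ ε` is an inverse because `ε i_! i^* = i_! i^* ε`.
Finally `Φ i_!` is the left Kan extension of `i ⋙ F` along `y_A`, so `b ↦ Φ i_! i^* (y_B b)`
is a colimit over the arrows `i a ⟶ b`, i.e. it is `Lan_i (i ⋙ F)`, and under this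
identification the restriction of `Φ ε` to `y_B` is the canonical map `Lan_i (i ⋙ F) ⟶ F`.
-/

open CategoryTheory CategoryTheory.Limits

universe v w u

namespace CategoryTheory

namespace Adjunction

variable {D E H : Type*} [Category* D] [Category* E] [Category* H]
  {L : D ⥤ E} {R : E ⥤ D} (adj : L ⊣ R) [IsIso adj.unit]

instance isIso_map_counit_app_of_isIso_unit (Q : E) : IsIso (R.map (adj.counit.app Q)) :=
  isIso_of_hom_comp_eq_id _ (adj.right_triangle_components Q)

lemma counit_app_obj_obj_eq_map_map (Q : E) :
    adj.counit.app (L.obj (R.obj Q)) = L.map (R.map (adj.counit.app Q)) := by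
  rw [← IsIso.inv_eq_of_hom_inv_id (adj.right_triangle_components Q), Functor.map_inv,
    IsIso.eq_inv_of_hom_inv_id (adj.left_triangle_components (R.obj Q))]

lemma isIso_whiskerRight_counit_of_comp_eq_id (Φ : E ⥤ H) (δ : Φ ⟶ (R ⋙ L) ⋙ Φ)
    (hδ : δ ≫ Functor.whiskerRight adj.counit Φ = 𝟙 _) :
    IsIso (Functor.whiskerRight adj.counit Φ) := by
  refine ⟨δ, ?_, hδ⟩
  ext Q
  have hnat := δ.naturality (adj.counit.app Q)
  dsimp at hnat ⊢
  rw [hnat, ← counit_app_obj_obj_eq_map_map]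
  exact congr_app hδ (L.obj (R.obj Q))

lemma exists_iso_comp_iff_isIso_whiskerRight_counit (Φ : E ⥤ H) :
    (∃ G : D ⥤ H, Nonempty (Φ ≅ R ⋙ G)) ↔ IsIso (Functor.whiskerRight adj.counit Φ) := by
  constructor
  · rintro ⟨G, ⟨e⟩⟩
    have (Q : E) : IsIso ((Functor.whiskerRight adj.counit Φ).app Q) :=
      (NatIso.isIso_map_iff e _).mpr (inferInstanceAs (IsIso (G.map (R.map _))))
    exact NatIso.isIso_of_isIso_app _
  · intro
    exact ⟨L ⋙ Φ, ⟨(asIso (Functor.whiskerRight adj.counit Φ)).symm⟩⟩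

lemma isIso_whiskerRight_counit_iff_of_isLeftKanExtension {J : Type*} [Category* J]
    {K : J ⥤ E} {F : J ⥤ H} (Φ : E ⥤ H) (η : F ⟶ K ⋙ Φ) [Φ.IsLeftKanExtension η] :
    IsIso (Functor.whiskerRight adj.counit Φ) ↔
      IsIso (Functor.whiskerLeft K (Functor.whiskerRight adj.counit Φ)) := by
  refine ⟨fun _ => inferInstance, fun _ => ?_⟩
  refine adj.isIso_whiskerRight_counit_of_comp_eq_id Φ
    (Φ.descOfIsLeftKanExtension η _
      (η ≫ inv (Functor.whiskerLeft K (Functor.whiskerRight adj.counit Φ)))) ?_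
  apply Φ.hom_ext_of_isLeftKanExtension η
  simp

end Adjunction

variable {A B : Type u} [SmallCategory A] [SmallCategory B] (i : A ⥤ B)

@[simps]
def yonedaMapNatTrans :
    yoneda ⟶ i ⋙ yoneda ⋙ (Functor.whiskeringLeft Aᵒᵖ Bᵒᵖ (Type u)).obj i.op where
  app := yonedaMap i
  naturality _ _ f := by
    ext _ g
    simp [yonedaMap]

namespace CostructuredArrow

variable {i} {b : B}

def toYonedaRestrict (f : CostructuredArrow i b) :
    yoneda.obj f.left ⟶ i.op ⋙ yoneda.obj b :=
  yonedaEquiv.symm (f.hom : (i.op ⋙ yoneda.obj b).obj (Opposite.op f.left))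

variable (i b) in
def toCostructuredArrowYonedaRestrict :
    CostructuredArrow i b ⥤ CostructuredArrow yoneda (i.op ⋙ yoneda.obj b) where
  obj f := CostructuredArrow.mk (toYonedaRestrict f)
  map {f f'} g := CostructuredArrow.homMk g.left (by
    ext a h
    change i.map (h ≫ g.left) ≫ f'.hom = i.map h ≫ f.hom
    rw [i.map_comp, Category.assoc, CostructuredArrow.w g])

instance : (toCostructuredArrowYonedaRestrict i b).Faithful where
  map_injective h := by
    ext
    exact (congr_arg CommaMorphism.left h :)

instance : (toCostructuredArrowYonedaRestrict i b).Full where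
  map_surjective {f f'} g := by
    refine ⟨CostructuredArrow.homMk g.left ?_, rfl⟩
    have h := congr_arg yonedaEquiv (CostructuredArrow.w g)
    rw [yonedaEquiv_comp, yonedaEquiv_yoneda_map] at h
    exact h.trans (yonedaEquiv.apply_symm_apply _)

instance : (toCostructuredArrowYonedaRestrict i b).EssSurj where
  mem_essImage g := ⟨CostructuredArrow.mk (yonedaEquiv g.hom : i.obj g.left ⟶ b),
    ⟨CostructuredArrow.isoMk (Iso.refl _) (by
      have h : toYonedaRestrict (CostructuredArrow.mk (yonedaEquiv g.hom : i.obj g.left ⟶ b)) =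
          g.hom :=
        yonedaEquiv.symm_apply_apply g.hom
      simpa [toCostructuredArrowYonedaRestrict] using h.symm)⟩⟩

instance : (toCostructuredArrowYonedaRestrict i b).IsEquivalence where

end CostructuredArrow

section FullyFaithful

variable [i.Full] [i.Faithful]

instance : IsIso (yonedaMapNatTrans i) := by
  have (a : A) (a' : Aᵒᵖ) : IsIso (((yonedaMapNatTrans i).app a).app a') := by
    rw [isIso_iff_bijective]
    exact (Functor.FullyFaithful.ofFullyFaithful i).map_bijective _ _
  have (a : A) : IsIso ((yonedaMapNatTrans i).app a) := NatIso.isIso_of_isIso_app _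
  exact NatIso.isIso_of_isIso_app _

instance isIso_lanAdjunction_counit_app_yoneda_obj (a : A) :
    IsIso ((i.op.lanAdjunction (Type u)).counit.app (yoneda.obj (i.obj a))) := by
  rw [Functor.isIso_lanAdjunction_counit_app_iff]
  exact (Functor.isLeftKanExtension_iff_of_iso₂ (yonedaMap i a) (𝟙 _)
    (asIso ((yonedaMapNatTrans i).app a)) (Iso.refl _) (by simp)).mp inferInstance

noncomputable def compYonedaIsoYonedaCompLan : i ⋙ yoneda ≅ yoneda ⋙ i.op.lan :=
  have (a : A) :
      IsIso ((Functor.whiskerLeft (i ⋙ yoneda) (i.op.lanAdjunction (Type u)).counit).app a) :=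
    isIso_lanAdjunction_counit_app_yoneda_obj i a
  have : IsIso (Functor.whiskerLeft (i ⋙ yoneda) (i.op.lanAdjunction (Type u)).counit) :=
    NatIso.isIso_of_isIso_app _
  (asIso (Functor.whiskerLeft (i ⋙ yoneda) (i.op.lanAdjunction (Type u)).counit)).symm ≪≫
    Functor.isoWhiskerRight (asIso (yonedaMapNatTrans i)).symm i.op.lan

end FullyFaithful

section KanExtensions

variable {C : Type w} [Category.{v} C] [HasColimitsOfSize.{u, u} C]

noncomputable def isPointwiseLeftKanExtensionYonedaCompRestrictComp (G : A ⥤ C)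
    (H : (Aᵒᵖ ⥤ Type u) ⥤ C) (uH : G ⟶ yoneda ⋙ H) [H.IsLeftKanExtension uH] :
    (Functor.LeftExtension.mk (yoneda ⋙ (Functor.whiskeringLeft Aᵒᵖ Bᵒᵖ (Type u)).obj i.op ⋙ H)
      (uH ≫ Functor.whiskerRight (yonedaMapNatTrans i) H)).IsPointwiseLeftKanExtension :=
  fun b => by
    have hH := Functor.isPointwiseLeftKanExtensionOfIsLeftKanExtension H uH
      (i.op ⋙ yoneda.obj b)
    refine IsColimit.ofIsoColimit
      (hH.whiskerEquivalence
        (CostructuredArrow.toCostructuredArrowYonedaRestrict i b).asEquivalence)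
      (Cocone.ext (Iso.refl _) (fun f => ?_))
    have key : CostructuredArrow.toYonedaRestrict f =
        (yonedaMapNatTrans i).app f.left ≫ Functor.whiskerLeft i.op (yoneda.map f.hom) := by
      ext
      rfl
    change (uH.app f.left ≫ H.map (CostructuredArrow.toYonedaRestrict f)) ≫ 𝟙 _ =
      (uH.app f.left ≫ H.map ((yonedaMapNatTrans i).app f.left)) ≫
        H.map (Functor.whiskerLeft i.op (yoneda.map f.hom))
    rw [Category.comp_id, Category.assoc, ← H.map_comp, key]

noncomputable def isPointwiseLeftKanExtensionCompLeftKanExtension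
    (L : (Aᵒᵖ ⥤ Type u) ⥤ (Bᵒᵖ ⥤ Type u)) [PreservesColimitsOfSize.{u, u} L]
    (e : i ⋙ yoneda ≅ yoneda ⋙ L) (F : B ⥤ C) :
    (Functor.LeftExtension.mk (L ⋙ yoneda.leftKanExtension F)
      (Functor.whiskerLeft i (yoneda.leftKanExtensionUnit F) ≫
        Functor.whiskerRight e.hom (yoneda.leftKanExtension F))).IsPointwiseLeftKanExtension := by
  intro P
  -- The arrows `y_B (i a) ⟶ L P` from the colimit presentation of `L P` are final among all
  -- arrows from representables to `L P`, so the colimit computing `Φ (L P)` may be taken over them.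
  let c := (Cocone.precompose (Functor.isoWhiskerLeft (CostructuredArrow.proj yoneda P) e).hom).obj
    (L.mapCocone (Presheaf.tautologicalCocone P))
  have hc : IsColimit c := (IsColimit.precomposeHomEquiv _ _).symm
    (isColimitOfPreserves L (Presheaf.isColimitTautologicalCocone P))
  have := Presheaf.final_toCostructuredArrow_comp_pre (F := CostructuredArrow.proj yoneda P ⋙ i) hc
  refine IsColimit.ofIsoColimit
    ((Functor.Final.isColimitWhiskerEquiv
        (c.toCostructuredArrow ⋙
          CostructuredArrow.pre (CostructuredArrow.proj yoneda P ⋙ i) yoneda c.pt) _).symm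
      (Functor.isPointwiseLeftKanExtensionOfIsLeftKanExtension _
        (yoneda.leftKanExtensionUnit F) (L.obj P)))
    (Cocone.ext (Iso.refl _) (fun x => ?_))
  change ((yoneda.leftKanExtensionUnit F).app (i.obj x.left) ≫ (yoneda.leftKanExtension F).map
      (e.hom.app x.left ≫ L.map x.hom)) ≫ 𝟙 _ =
    ((yoneda.leftKanExtensionUnit F).app (i.obj x.left) ≫ (yoneda.leftKanExtension F).map
      (e.hom.app x.left)) ≫ (yoneda.leftKanExtension F).map (L.map x.hom)
  simp

lemma isIso_descOfIsLeftKanExtension_iff_isIso_whiskerLeft_yoneda [i.Full] [i.Faithful]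
    (F : B ⥤ C) :
    IsIso ((i.leftKanExtension (i ⋙ F)).descOfIsLeftKanExtension
        (i.leftKanExtensionUnit (i ⋙ F)) F (𝟙 (i ⋙ F))) ↔
      IsIso (Functor.whiskerLeft yoneda (Functor.whiskerRight
        (i.op.lanAdjunction (Type u)).counit (yoneda.leftKanExtension F))) := by
  have : IsIso (yoneda.leftKanExtensionUnit F) :=
    (Functor.isPointwiseLeftKanExtensionOfIsLeftKanExtension (yoneda.leftKanExtension F)
      (yoneda.leftKanExtensionUnit F)).isIso_hom
  have : PreservesColimitsOfSize.{u, u} (i.op.lan (H := Type u)) :=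
    (i.op.lanAdjunction (Type u)).leftAdjoint_preservesColimits
  let uH : i ⋙ F ⟶ yoneda ⋙ i.op.lan ⋙ yoneda.leftKanExtension F :=
    Functor.whiskerLeft i (yoneda.leftKanExtensionUnit F) ≫
      Functor.whiskerRight (compYonedaIsoYonedaCompLan i).hom (yoneda.leftKanExtension F)
  have : (i.op.lan ⋙ yoneda.leftKanExtension F).IsLeftKanExtension uH :=
    (isPointwiseLeftKanExtensionCompLeftKanExtension i i.op.lan
      (compYonedaIsoYonedaCompLan i) F).isLeftKanExtension
  have : (yoneda ⋙ ((Functor.whiskeringLeft Aᵒᵖ Bᵒᵖ (Type u)).obj i.op ⋙ i.op.lan) ⋙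
      yoneda.leftKanExtension F).IsLeftKanExtension
        (uH ≫ Functor.whiskerRight (yonedaMapNatTrans i) _) :=
    (isPointwiseLeftKanExtensionYonedaCompRestrictComp i (i ⋙ F) _ uH).isLeftKanExtension
  rw [← Functor.isLeftKanExtension_iff_isIso _ (i.leftKanExtensionUnit (i ⋙ F)) (𝟙 _)
      (Functor.descOfIsLeftKanExtension_fac _ _ _ _),
    Functor.isLeftKanExtension_iff_isIso (Functor.whiskerLeft yoneda (Functor.whiskerRight
      (i.op.lanAdjunction (Type u)).counit (yoneda.leftKanExtension F)) ≫
        inv (yoneda.leftKanExtensionUnit F))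
      (uH ≫ Functor.whiskerRight (yonedaMapNatTrans i) _) (𝟙 (i ⋙ F)) ?_, isIso_comp_right_iff]
  ext a
  simp [uH, compYonedaIsoYonedaCompLan]

end KanExtensions

end CategoryTheory

theorem statement0 {A B : Type u} [SmallCategory A] [SmallCategory B]
    {C : Type w} [Category.{v} C] [HasColimitsOfSize.{u, u} C]
    (i : A ⥤ B) [i.Full] [i.Faithful] (F : B ⥤ C) :
    (∃ G : (Aᵒᵖ ⥤ Type u) ⥤ C,
        Nonempty (yoneda.leftKanExtension F ≅ ((Functor.whiskeringLeft Aᵒᵖ Bᵒᵖ (Type u)).obj i.op) ⋙ G))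
      ↔ IsIso ((i.leftKanExtension (i ⋙ F)).descOfIsLeftKanExtension
          (i.leftKanExtensionUnit (i ⋙ F)) F (𝟙 (i ⋙ F))) := by
  rw [(i.op.lanAdjunction (Type u)).exists_iso_comp_iff_isIso_whiskerRight_counit,
    (i.op.lanAdjunction (Type u)).isIso_whiskerRight_counit_iff_of_isLeftKanExtension _
      (yoneda.leftKanExtensionUnit F),
    isIso_descOfIsLeftKanExtension_iff_isIso_whiskerLeft_yoneda]
end

section
/- Let A and B be small categories with i : A → B fully faithful, and let C be a category with all small colimits. A functor H : P(B) → C factors through i^* up to natural isomorphism (i.e. there exist G : P(A) → C and a natural isomorphism H ≅ G ∘ i^*) if and only if the natural transformation H ∘ ε : H ∘ i_! ∘ i^* → H, obtained by whiskering the counit ε : i_! ∘ i^* → id of the adjunction i_! ⊣ i^* with H, is a natural isomorphism. -/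
open CategoryTheory CategoryTheory.Limits

universe v w u

/-!
Since `i` is fully faithful, the unit `id → i^* ∘ i_!` is an isomorphism, so by a triangle
identity `i^* ε` is invertible. Hence every functor of the form `G ∘ i^*` inverts `ε`;
conversely, if `H ε` is invertible then `H ≅ H ∘ i_! ∘ i^*`, so `H` factors through `i^*` with
`G = H ∘ i_!`.
-/

lemma CategoryTheory.NatTrans.isIso_whiskerRight_of_iso {C D D' : Type*} [Category C]
    [Category D] [Category D'] {F F' : D' ⥤ D} (α : F ⟶ F') {H H' : D ⥤ C} (e : H ≅ H')
    [IsIso (Functor.whiskerRight α H')] :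
    IsIso (Functor.whiskerRight α H) :=
  (isIso_iff_isIso_app _).mpr fun X =>
    (NatIso.isIso_map_iff e _).mpr (inferInstanceAs (IsIso ((Functor.whiskerRight α H').app X)))

namespace CategoryTheory.Adjunction

variable {C D E : Type*} [Category C] [Category D] [Category E]
  {L : E ⥤ D} {R : D ⥤ E} (adj : L ⊣ R)

lemma isIso_whiskerRight_counit_comp [IsIso adj.unit] (G : E ⥤ C) :
    IsIso (Functor.whiskerRight adj.counit (R ⋙ G)) := by
  have := adj.fullyFaithfulLOfIsIsoUnit.full
  have := adj.fullyFaithfulLOfIsIsoUnit.faithful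
  exact (NatTrans.isIso_iff_isIso_app _).mpr fun X =>
    inferInstanceAs (IsIso (G.map (R.map (adj.counit.app X))))

theorem exists_iso_comp_right_iff_isIso_whiskerRight_counit [IsIso adj.unit] (H : D ⥤ C) :
    (∃ G : E ⥤ C, Nonempty (H ≅ R ⋙ G)) ↔ IsIso (Functor.whiskerRight adj.counit H) := by
  constructor
  · rintro ⟨G, ⟨e⟩⟩
    have := adj.isIso_whiskerRight_counit_comp G
    exact NatTrans.isIso_whiskerRight_of_iso _ e
  · intro _
    exact ⟨L ⋙ H, ⟨H.leftUnitor.symm ≪≫ (asIso (Functor.whiskerRight adj.counit H)).symm ≪≫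
      Functor.associator _ _ _⟩⟩

end CategoryTheory.Adjunction

theorem statement2_general {A B : Type u} [SmallCategory A] [SmallCategory B]
    {C : Type w} [Category.{v} C]
    (i : A ⥤ B) [i.Full] [i.Faithful]
    (H : (Bᵒᵖ ⥤ Type u) ⥤ C) :
    (∃ G : (Aᵒᵖ ⥤ Type u) ⥤ C,
        Nonempty (H ≅ ((Functor.whiskeringLeft Aᵒᵖ Bᵒᵖ (Type u)).obj i.op) ⋙ G))
      ↔ IsIso (Functor.whiskerRight (i.op.lanAdjunction (Type u)).counit H) :=
  (i.op.lanAdjunction (Type u)).exists_iso_comp_right_iff_isIso_whiskerRight_counit H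

theorem statement2 {A B : Type u} [SmallCategory A] [SmallCategory B]
    {C : Type w} [Category.{v} C] [HasColimitsOfSize.{u, u} C]
    (i : A ⥤ B) [i.Full] [i.Faithful]
    (H : (Bᵒᵖ ⥤ Type u) ⥤ C) :
    (∃ G : (Aᵒᵖ ⥤ Type u) ⥤ C,
        Nonempty (H ≅ ((Functor.whiskeringLeft Aᵒᵖ Bᵒᵖ (Type u)).obj i.op) ⋙ G))
      ↔ IsIso (Functor.whiskerRight (i.op.lanAdjunction (Type u)).counit H) :=
  statement2_general i H
end

section
/- Let A and B be small categories, i : A → B a fully faithful functor, C a category with all small colimits, and F : B → C a functor. There is a canonical natural isomorphism F ∘ i ≅ Lan_{y_B}(F) ∘ i_! ∘ y_A (arising from the natural isomorphisms i_! ∘ y_A ≅ y_B ∘ i and Lan_{y_B}(F) ∘ y_B ≅ F, the latter holding because y_B is fully faithful). Moreover, the natural transformation Lan_{y_A}(F ∘ i) → Lan_{y_B}(F) ∘ i_! induced by this isomorphism via the universal property of the left Kan extension along y_A is a natural isomorphism. -/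
open CategoryTheory CategoryTheory.Limits

universe v w u v₁ u₁ u₂

namespace CategoryTheory.Presheaf

/-- `F ⋙ yoneda` is naturally isomorphic to `yoneda ⋙ F.op.lan` (the pre-2025 Mathlib
definition, restored verbatim in its data). -/
noncomputable def compYonedaIsoYonedaCompLan {C : Type u₁} [Category.{v₁} C] {D : Type u₂}
    [Category.{v₁} D] (F : C ⥤ D) [∀ (P : Cᵒᵖ ⥤ Type v₁), F.op.HasLeftKanExtension P] :
    F ⋙ yoneda ≅ yoneda ⋙ F.op.lan :=
  NatIso.ofComponents (fun X => Functor.leftKanExtensionUnique _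
    (yonedaMap F X) (F.op.lan.obj _) (F.op.lanUnit.app (yoneda.obj X)))
    (fun {X Y} f => by
      apply yonedaEquiv.injective
      have eq₁ := ConcreteCategory.congr_hom
        ((yoneda.obj (F.obj Y)).descOfIsLeftKanExtension_fac_app
        (yonedaMap F Y) (F.op.lan.obj (yoneda.obj Y))
          (F.op.lanUnit.app (yoneda.obj Y)) (Opposite.op X)) f
      have eq₂ := ConcreteCategory.congr_hom
        (((yoneda.obj (F.obj X)).descOfIsLeftKanExtension_fac_app
        (yonedaMap F X) (F.op.lan.obj (yoneda.obj X))
          (F.op.lanUnit.app (yoneda.obj X))) (Opposite.op X)) (𝟙 X)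
      have eq₃ := ConcreteCategory.congr_hom (congr_app (F.op.lanUnit.naturality
        (yoneda.map f)) (Opposite.op X)) (𝟙 X)
      dsimp [yonedaMap, yonedaEquiv, Functor.leftKanExtensionUnique] at eq₁ eq₂ eq₃ ⊢
      simp only [Functor.map_id] at eq₂
      simp only [Category.id_comp] at eq₃
      dsimp only [Functor.leftKanExtensionUniqueOfIso, Iso.refl_hom]
      simp only [Category.id_comp]
      rw [eq₁, eq₂, eq₃])

end CategoryTheory.Presheaf


/-!
Both `Lan_{y_A}(F ∘ i)` and `Lan_{y_B}(F) ∘ i_!` preserve small colimits and restrict along `y_A`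
to `F ∘ i`; since every presheaf is the colimit of the representables over it, such a functor is
a left Kan extension along `y_A`, so the comparison map is an isomorphism. The left Kan extension
`Lan_{y_B}(F)` preserves colimits because maps `Lan_{y_B}(F)(P) ⟶ E` correspond naturally to maps
from `P` to the restricted Yoneda presheaf `b ↦ (F b ⟶ E)`.
-/

open Opposite

namespace CategoryTheory.Limits

variable {𝒟 𝒟' 𝒞 J : Type*} [Category* 𝒟] [Category* 𝒟'] [Category* 𝒞] [Category* J]

lemma preservesColimit_of_natural_homEquiv (L : 𝒟 ⥤ 𝒞) (ℓ : 𝒟 ⥤ 𝒟') (R : 𝒞 → 𝒟')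
    (e : ∀ P E, (L.obj P ⟶ E) ≃ (ℓ.obj P ⟶ R E))
    (he : ∀ {P Q} (f : P ⟶ Q) {E} (g : L.obj Q ⟶ E), e P E (L.map f ≫ g) = ℓ.map f ≫ e Q E g)
    (K : J ⥤ 𝒟) [PreservesColimit K ℓ] : PreservesColimit K L where
  preserves {c} hc := by
    have hℓc := isColimitOfPreserves ℓ hc
    let transport (s : Cocone (K ⋙ L)) : Cocone (K ⋙ ℓ) :=
      { pt := R s.pt
        ι :=
          { app j := e _ _ (s.ι.app j)
            naturality j j' φ := by
              dsimp
              rw [← he, Category.comp_id]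
              exact congrArg (e _ _) (s.w φ) } }
    refine ⟨{ desc s := (e _ _).symm (hℓc.desc (transport s)), fac s j := ?_, uniq s m hm := ?_ }⟩
    · apply (e _ _).injective
      dsimp
      rw [he, Equiv.apply_symm_apply]
      exact hℓc.fac (transport s) j
    · rw [Equiv.eq_symm_apply]
      refine hℓc.hom_ext fun j ↦ ?_
      dsimp
      rw [← he]
      exact (congrArg (e _ _) (hm j)).trans (hℓc.fac (transport s) j).symm

end CategoryTheory.Limits

namespace CategoryTheory.Presheaf

variable {B : Type u} [SmallCategory B] {C : Type w} [Category.{v} C]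

/- The hom-sets of `C` live in `Type v`, so the restricted Yoneda presheaves `b ↦ (F b ⟶ E)` take
values in `Type (max u v)`, and `Lan_y F` is left adjoint to restricted Yoneda only relative to this
lift (Mathlib's `uliftYonedaAdjunction` needs presheaves valued in a universe containing `v`). -/
abbrev uliftWhiskering : (Bᵒᵖ ⥤ Type u) ⥤ Bᵒᵖ ⥤ Type (max u v) :=
  (Functor.whiskeringRight _ _ _).obj uliftFunctor.{v}

variable {F : B ⥤ C} {L : (Bᵒᵖ ⥤ Type u) ⥤ C} {α : F ⟶ yoneda ⋙ L}

def coconeOfHomRestrictedULiftYoneda {P : Bᵒᵖ ⥤ Type u} {E : C}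
    (φ : uliftWhiskering.obj P ⟶ (restrictedULiftYoneda.{u} F).obj E) :
    Cocone (CostructuredArrow.proj yoneda P ⋙ F) where
  pt := E
  ι :=
    { app g := (φ.app (op g.left) ⟨yonedaEquiv g.hom⟩).down
      naturality g₁ g₂ f := by
        have h : (φ.app (op g₁.left) ⟨P.map f.left.op (yonedaEquiv g₂.hom)⟩).down =
            F.map f.left ≫ (φ.app (op g₂.left) ⟨yonedaEquiv g₂.hom⟩).down :=
          congrArg ULift.down (φ.naturality_apply f.left.op ⟨yonedaEquiv g₂.hom⟩)
        change F.map f.left ≫ _ = _ ≫ 𝟙 E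
        rw [Category.comp_id, ← h, yonedaEquiv_naturality, CostructuredArrow.w f] }

variable (α) in
def homEquivOfIsPointwiseLeftKanExtension
    (hL : (Functor.LeftExtension.mk L α).IsPointwiseLeftKanExtension) (P : Bᵒᵖ ⥤ Type u) (E : C) :
    (L.obj P ⟶ E) ≃ (uliftWhiskering.obj P ⟶ (restrictedULiftYoneda.{u} F).obj E) where
  toFun f :=
    { app b := ↾fun x ↦ ULift.up (α.app b.unop ≫ L.map (yonedaEquiv.symm x.down) ≫ f)
      naturality b b' g := by
        ext x
        apply ULift.ext
        change α.app b'.unop ≫ L.map (yonedaEquiv.symm (P.map g x.down)) ≫ f =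
          F.map g.unop ≫ α.app b.unop ≫ L.map (yonedaEquiv.symm x.down) ≫ f
        rw [yonedaEquiv_symm_map, L.map_comp, α.naturality_assoc, Functor.comp_map,
          Category.assoc] }
  invFun φ := (hL P).desc (coconeOfHomRestrictedULiftYoneda φ)
  left_inv f := (hL P).hom_ext fun g ↦ by
    rw [(hL P).fac]
    change α.app g.left ≫ L.map (yonedaEquiv.symm (yonedaEquiv g.hom)) ≫ f =
      (α.app g.left ≫ L.map g.hom) ≫ f
    rw [Equiv.symm_apply_apply, Category.assoc]
  right_inv φ := by
    ext b x
    apply ULift.ext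
    have h := (hL P).fac (coconeOfHomRestrictedULiftYoneda φ)
      (CostructuredArrow.mk (yonedaEquiv.symm x.down))
    refine (Category.assoc _ _ _).symm.trans (h.trans ?_)
    change (φ.app b ⟨yonedaEquiv (yonedaEquiv.symm x.down)⟩).down = _
    rw [Equiv.apply_symm_apply]
    rfl

lemma homEquivOfIsPointwiseLeftKanExtension_naturality_left
    (hL : (Functor.LeftExtension.mk L α).IsPointwiseLeftKanExtension) {P Q : Bᵒᵖ ⥤ Type u}
    (f : P ⟶ Q) {E : C} (g : L.obj Q ⟶ E) :
    homEquivOfIsPointwiseLeftKanExtension α hL P E (L.map f ≫ g) =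
      uliftWhiskering.map f ≫ homEquivOfIsPointwiseLeftKanExtension α hL Q E g := by
  ext b x
  apply ULift.ext
  change α.app b.unop ≫ L.map (yonedaEquiv.symm x.down) ≫ L.map f ≫ g =
    α.app b.unop ≫ L.map (yonedaEquiv.symm (f.app b x.down)) ≫ g
  rw [← yonedaEquiv_symm_naturality_right, L.map_comp, Category.assoc]

lemma preservesColimitsOfSize_of_isPointwiseLeftKanExtension
    (hL : (Functor.LeftExtension.mk L α).IsPointwiseLeftKanExtension) :
    PreservesColimitsOfSize.{u, u} L where
  preservesColimitsOfShape :=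
    { preservesColimit := preservesColimit_of_natural_homEquiv L uliftWhiskering.{v} _
        (homEquivOfIsPointwiseLeftKanExtension α hL)
        (homEquivOfIsPointwiseLeftKanExtension_naturality_left hL) _ }

variable (α) in
lemma isLeftKanExtension_of_isIso_of_preservesColimits [IsIso α]
    [PreservesColimitsOfSize.{u, u} L] : L.IsLeftKanExtension α :=
  Functor.LeftExtension.IsPointwiseLeftKanExtension.isLeftKanExtension (E := .mk L α) fun P ↦
    (IsColimit.precomposeHomEquiv
      (Functor.isoWhiskerLeft (CostructuredArrow.proj yoneda P) (asIso α)) _).symm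
      (isColimitOfPreserves L (isColimitTautologicalCocone P))

end CategoryTheory.Presheaf

theorem statement3_general {A B : Type u} [SmallCategory A] [SmallCategory B]
    {C : Type w} [Category.{v} C] [HasColimitsOfSize.{u, u} C]
    (i : A ⥤ B) (F : B ⥤ C) :
    IsIso (Functor.whiskerLeft i (yoneda.leftKanExtensionUnit F) ≫
        (Functor.associator i yoneda (yoneda.leftKanExtension F)).inv ≫
        Functor.whiskerRight (Presheaf.compYonedaIsoYonedaCompLan i).hom (yoneda.leftKanExtension F) ≫
        (Functor.associator yoneda i.op.lan (yoneda.leftKanExtension F)).hom) ∧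
    IsIso ((yoneda.leftKanExtension (i ⋙ F)).descOfIsLeftKanExtension
        (yoneda.leftKanExtensionUnit (i ⋙ F)) (i.op.lan ⋙ yoneda.leftKanExtension F)
        (Functor.whiskerLeft i (yoneda.leftKanExtensionUnit F) ≫
          (Functor.associator i yoneda (yoneda.leftKanExtension F)).inv ≫
          Functor.whiskerRight (Presheaf.compYonedaIsoYonedaCompLan i).hom (yoneda.leftKanExtension F) ≫
          (Functor.associator yoneda i.op.lan (yoneda.leftKanExtension F)).hom)) := by
  have hLan := Functor.isPointwiseLeftKanExtensionOfIsLeftKanExtension _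
    (yoneda.leftKanExtensionUnit F)
  have : IsIso (yoneda.leftKanExtensionUnit F) := hLan.isIso_hom
  have : PreservesColimitsOfSize.{u, u} (yoneda.leftKanExtension F) :=
    Presheaf.preservesColimitsOfSize_of_isPointwiseLeftKanExtension hLan
  have : PreservesColimitsOfSize.{u, u} i.op.lan :=
    (i.op.lanAdjunction (Type u)).leftAdjoint_preservesColimits
  refine ⟨inferInstance, ?_⟩
  rw [← Functor.isLeftKanExtension_iff_isIso _ (yoneda.leftKanExtensionUnit (i ⋙ F)) _
    (Functor.descOfIsLeftKanExtension_fac _ _ _ _)]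
  exact Presheaf.isLeftKanExtension_of_isIso_of_preservesColimits _

theorem statement3 {A B : Type u} [SmallCategory A] [SmallCategory B]
    {C : Type w} [Category.{v} C] [HasColimitsOfSize.{u, u} C]
    (i : A ⥤ B) [i.Full] [i.Faithful] (F : B ⥤ C) :
    IsIso (Functor.whiskerLeft i (yoneda.leftKanExtensionUnit F) ≫
        (Functor.associator i yoneda (yoneda.leftKanExtension F)).inv ≫
        Functor.whiskerRight (Presheaf.compYonedaIsoYonedaCompLan i).hom (yoneda.leftKanExtension F) ≫
        (Functor.associator yoneda i.op.lan (yoneda.leftKanExtension F)).hom) ∧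
    IsIso ((yoneda.leftKanExtension (i ⋙ F)).descOfIsLeftKanExtension
        (yoneda.leftKanExtensionUnit (i ⋙ F)) (i.op.lan ⋙ yoneda.leftKanExtension F)
        (Functor.whiskerLeft i (yoneda.leftKanExtensionUnit F) ≫
          (Functor.associator i yoneda (yoneda.leftKanExtension F)).inv ≫
          Functor.whiskerRight (Presheaf.compYonedaIsoYonedaCompLan i).hom (yoneda.leftKanExtension F) ≫
          (Functor.associator yoneda i.op.lan (yoneda.leftKanExtension F)).hom)) :=
  statement3_general i F
end

section
/- Let A and B be small categories, i : A → B a fully faithful functor, and C a category with all small colimits. For any functor H : A → C, there is a natural isomorphism Lan_{y_A}(H) ∘ i^* ≅ Lan_{y_B ∘ i}(H) of functors P(B) → C, natural in H; equivalently, (i^*)^* ∘ (y_A)_! ≅ (y_B)_! ∘ Lan_i(−) as functors from Fun(A, C) to the category of colimit-preserving functors P(B) → C. -/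
/-!
Both functors are left adjoints, so it suffices to compare their right adjoints. Restriction
along `i^*` is left adjoint to restriction along `i_!` (whisker `i_! ⊣ i^*`), so the composite
`(i^*)^* ∘ (y_A)_!` is left adjoint to `G ↦ G ∘ i_! ∘ y_A`. Since `i_!` extends `i` along
the Yoneda embeddings, `i_! ∘ y_A ≅ y_B ∘ i`, and that right adjoint is restriction along
`y_B ∘ i`, whose left adjoint is `Lan_{y_B ∘ i}`.
-/

open CategoryTheory CategoryTheory.Limits

universe v w u

namespace CategoryTheory.Functor

variable {A B : Type u} [SmallCategory A] [SmallCategory B]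

noncomputable def compYonedaIsoYonedaCompLan (F : A ⥤ B) :
    F ⋙ yoneda ≅ yoneda ⋙ F.op.lan :=
  isoWhiskerLeft F uliftYonedaIsoYoneda.{u}.symm ≪≫
    Presheaf.compULiftYonedaIsoULiftYonedaCompLan.{u} F ≪≫
    isoWhiskerRight uliftYonedaIsoYoneda.{u} _

variable (C : Type w) [Category.{v} C] [HasColimitsOfSize.{u, u} C]

noncomputable def lanYonedaCompPrecompAdjunction (F : A ⥤ B) :
    yoneda.lan ⋙ (whiskeringLeft (Bᵒᵖ ⥤ Type u) (Aᵒᵖ ⥤ Type u) C).obj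
        ((whiskeringLeft Aᵒᵖ Bᵒᵖ (Type u)).obj F.op) ⊣
      (whiskeringLeft A (Bᵒᵖ ⥤ Type u) C).obj (F ⋙ yoneda) :=
  (yoneda.lanAdjunction C |>.comp ((F.op.lanAdjunction (Type u)).whiskerLeft C)).ofNatIsoRight
    ((whiskeringLeft A (Bᵒᵖ ⥤ Type u) C).mapIso (compYonedaIsoYonedaCompLan F).symm)

end CategoryTheory.Functor

theorem statement4_general {A B : Type u} [SmallCategory A] [SmallCategory B]
    {C : Type w} [Category.{v} C] [HasColimitsOfSize.{u, u} C]
    (i : A ⥤ B) :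
    Nonempty
      ((yoneda.lan ⋙ (Functor.whiskeringLeft (Bᵒᵖ ⥤ Type u) (Aᵒᵖ ⥤ Type u) C).obj
          ((Functor.whiskeringLeft Aᵒᵖ Bᵒᵖ (Type u)).obj i.op) :
            (A ⥤ C) ⥤ ((Bᵒᵖ ⥤ Type u) ⥤ C))
        ≅ (i ⋙ yoneda).lan) :=
  ⟨(i.lanYonedaCompPrecompAdjunction C).leftAdjointUniq ((i ⋙ yoneda).lanAdjunction C)⟩

theorem statement4 {A B : Type u} [SmallCategory A] [SmallCategory B]
    {C : Type w} [Category.{v} C] [HasColimitsOfSize.{u, u} C]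
    (i : A ⥤ B) [i.Full] [i.Faithful] :
    Nonempty
      ((yoneda.lan ⋙ (Functor.whiskeringLeft (Bᵒᵖ ⥤ Type u) (Aᵒᵖ ⥤ Type u) C).obj
          ((Functor.whiskeringLeft Aᵒᵖ Bᵒᵖ (Type u)).obj i.op) :
            (A ⥤ C) ⥤ ((Bᵒᵖ ⥤ Type u) ⥤ C))
        ≅ (i ⋙ yoneda).lan) :=
  statement4_general i
end
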